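/- Let f : ℕ×{0,1} → ℝ_{≥0} be finitely supported on the ladder graph and let f* denote its rearrangement with respect to the lexicographic enumeration. Then ‖∇f*‖_{L¹} ≤ ‖∇f‖_{L¹} and ‖∇f*‖_{L^∞} ≤ ‖∇f‖_{L^∞}. -/

import Mathlib

open Real

/-- The edge boundary of a set `A`: the edges of `G` with exactly one endpoint in `A`. -/
def edgeBoundary {V : Type*} (G : SimpleGraph V) (A : Set V) : Set (Sym2 V) :=
  {e | e ∈ G.edgeSet ∧ ∃ u w : V, e = s(u, w) ∧ u ∈ A ∧ w ∉ A}

/-- The vertex boundary of `A`: vertices outside `A` adjacent to some vertex of `A`. -/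
def vertexBoundary {V : Type*} (G : SimpleGraph V) (A : Set V) : Set V :=
  {u | u ∉ A ∧ ∃ w ∈ A, G.Adj u w}

/-- The vertex-isoperimetric profile `∂_V(N)`. -/
noncomputable def vertexProfile {V : Type*} (G : SimpleGraph V) (N : ℕ) : ℕ :=
  sInf {k : ℕ | ∃ A : Set V, A.Finite ∧ A.ncard = N ∧ (vertexBoundary G A).ncard = k}

/-- `‖∇f‖_{L¹} = ∑_{{u,w} ∈ E} |f u - f w|`. -/
noncomputable def gradL1 {V : Type*} (G : SimpleGraph V) (f : V → ℝ) : ℝ :=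
  ∑' e : G.edgeSet,
    Sym2.lift ⟨fun u w => |f u - f w|, fun u w => by dsimp only; rw [abs_sub_comm]⟩ e.1

/-- `‖∇f‖_{L^∞} = sup_{{u,w} ∈ E} |f u - f w|`. -/
noncomputable def gradLinf {V : Type*} (G : SimpleGraph V) (f : V → ℝ) : ℝ :=
  ⨆ e : G.edgeSet,
    Sym2.lift ⟨fun u w => |f u - f w|, fun u w => by dsimp only; rw [abs_sub_comm]⟩ e.1

/-- `‖∇f‖_{L^p} = (∑_{{u,w} ∈ E} |f u - f w|^p)^(1/p)` for real `p`. -/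
noncomputable def gradLp {V : Type*} (G : SimpleGraph V) (f : V → ℝ) (p : ℝ) : ℝ :=
  (∑' e : G.edgeSet,
    Sym2.lift ⟨fun u w => |f u - f w| ^ p,
      fun u w => by dsimp only; rw [abs_sub_comm]⟩ e.1) ^ (1 / p)

/-- `‖∇f‖_{L²} = (∑_{{u,w} ∈ E} |f u - f w|²)^(1/2)`. -/
noncomputable def gradL2 {V : Type*} (G : SimpleGraph V) (f : V → ℝ) : ℝ :=
  Real.sqrt (∑' e : G.edgeSet,
    Sym2.lift ⟨fun u w => |f u - f w| ^ 2,
      fun u w => by dsimp only; rw [abs_sub_comm]⟩ e.1)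

/-- `g` is the rearrangement of `f` along the enumeration `v` (with `v 0 = v₁`):
`g` is obtained from `f` by permuting its values, and the values of `g` are
non-increasing along the enumeration. -/
def IsRearrangement {V : Type*} (v : ℕ → V) (f g : V → ℝ) : Prop :=
  (∃ σ : Equiv.Perm V, g = f ∘ σ) ∧ ∀ m n : ℕ, m ≤ n → g (v n) ≤ g (v m)

/-- The grid graph `(ℤ², ℓ¹)`. -/
def gridGraph : SimpleGraph (ℤ × ℤ) where
  Adj p q := |p.1 - q.1| + |p.2 - q.2| = 1
  symm := by
    constructor
    intro p q h
    try dsimp only at h ⊢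
    rw [abs_sub_comm q.1 p.1, abs_sub_comm q.2 p.2]
    exact h
  loopless := by constructor; intro p h; simp at h

/-- One step of the counterclockwise square spiral on `ℤ²`. -/
def spiralNext : ℤ × ℤ → ℤ × ℤ := fun p =>
  if 1 ≤ p.1 ∧ p.2 = -p.1 then (p.1 + 1, p.2)
  else if 1 ≤ p.1 ∧ -p.1 ≤ p.2 ∧ p.2 < p.1 then (p.1, p.2 + 1)
  else if 1 ≤ p.2 ∧ -p.2 < p.1 ∧ p.1 ≤ p.2 then (p.1 - 1, p.2)
  else if p.1 ≤ -1 ∧ p.1 < p.2 ∧ p.2 ≤ -p.1 then (p.1, p.2 - 1)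
  else (p.1 + 1, p.2)

/-- The spiral enumeration of `ℤ²`, 0-indexed: `spiral 0 = v₁ = (0,0)`,
`spiral 1 = v₂ = (1,0)`, `spiral 2 = v₃ = (1,1)`, `spiral 3 = v₄ = (0,1)`, … -/
def spiral (n : ℕ) : ℤ × ℤ := spiralNext^[n] (0, 0)

/-- The ladder graph on `ℕ × {0,1}`: `(m,i)` adjacent to `(n,j)` iff `|m-n|+|i-j| = 1`. -/
def ladderGraph : SimpleGraph (ℕ × Fin 2) where
  Adj a b := |(a.1 : ℤ) - b.1| + |(a.2.1 : ℤ) - b.2.1| = 1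
  symm := by
    constructor
    intro a b h
    try dsimp only at h ⊢
    rw [abs_sub_comm (b.1 : ℤ) (a.1 : ℤ), abs_sub_comm (b.2.1 : ℤ) (a.2.1 : ℤ)]
    exact h
  loopless := by constructor; intro a h; simp at h

/-- The lexicographic enumeration of `ℕ × {0,1}`, 0-indexed:
`v₁ = (0,0), v₂ = (0,1), v₃ = (1,0), v₄ = (1,1), …` -/
def lexEnum (n : ℕ) : ℕ × Fin 2 := (n / 2, ⟨n % 2, Nat.mod_lt n (by norm_num)⟩)

/-!
Write `f = a ∘ r`, where `a : ℕ → ℝ` lists the values of `f` in decreasing order and `r` is the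
rank of a vertex; then `f* = a ∘ lexEquiv.symm`. Slicing `a` into layers gives the coarea formula
`‖∇(a ∘ r)‖₁ = ∑ₖ (aₖ - aₖ₊₁) · |∂{r ≤ k}|`, so the `L¹` inequality reduces to the
edge-isoperimetric fact that lexicographic initial segments have the smallest edge boundary: a
segment of `k + 1` vertices has at most 3 boundary edges, and at most 2 unless `k` is even and
nonzero, while every nonempty finite set has 2 and every set of odd size `≥ 3` has 3 (it has a
column containing exactly one of its vertices).

For `L^∞`, adjacent vertices have lexicographic ranks at most 2 apart, so every jump of `f*` is
at most some `aₖ - aₖ₊₂`. Conversely the set `{r ≤ k}` has two distinct outer neighbours, one of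
rank `≥ k + 2`, which yields an edge on which `f` jumps by at least `aₖ - aₖ₊₂`.
-/

section Gradient

variable {V : Type*} {G : SimpleGraph V}

noncomputable def edgeDiff (g : V → ℝ) : Sym2 V → ℝ :=
  Sym2.lift ⟨fun u w => |g u - g w|, fun u w => by dsimp only; rw [abs_sub_comm]⟩

@[simp]
lemma edgeDiff_mk (g : V → ℝ) (u w : V) : edgeDiff g s(u, w) = |g u - g w| := rfl

lemma gradL1_eq_tsum (g : V → ℝ) : gradL1 G g = ∑' e : G.edgeSet, edgeDiff g e := rfl

lemma mk_mem_edgeBoundary_iff {A : Set V} {u w : V} :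
    s(u, w) ∈ edgeBoundary G A ↔ G.Adj u w ∧ (u ∈ A ↔ w ∉ A) := by
  simp only [edgeBoundary, Set.mem_ofPred_eq, SimpleGraph.mem_edgeSet, Sym2.eq_iff]
  constructor
  · rintro ⟨h, u', w', ⟨rfl, rfl⟩ | ⟨rfl, rfl⟩, hu, hw⟩ <;> tauto
  · rintro ⟨h, hA⟩
    refine ⟨h, ?_⟩
    by_cases hu : u ∈ A
    · exact ⟨u, w, .inl ⟨rfl, rfl⟩, hu, hA.1 hu⟩
    · exact ⟨w, u, .inr ⟨rfl, rfl⟩, not_not.1 (mt hA.2 hu), hu⟩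

lemma mk_mem_edgeBoundary {A : Set V} {u w : V} (h : G.Adj u w) (hu : u ∈ A) (hw : w ∉ A) :
    s(u, w) ∈ edgeBoundary G A :=
  ⟨h, u, w, rfl, hu, hw⟩

lemma mk_eq_mk_iff_of_mem_of_notMem {A : Set V} {u w u' w' : V} (hu : u ∈ A) (hw' : w' ∉ A) :
    s(u, w) = s(u', w') ↔ u = u' ∧ w = w' := by
  rw [Sym2.eq_iff]
  refine or_iff_left ?_
  rintro ⟨rfl, -⟩
  exact hw' hu

lemma one_lt_ncard_edgeBoundary {A : Set V} (hfin : (edgeBoundary G A).Finite)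
    (h : (vertexBoundary G A).Nontrivial) : 1 < (edgeBoundary G A).ncard := by
  obtain ⟨w₁, ⟨hw₁, z₁, hz₁, h₁⟩, w₂, ⟨hw₂, z₂, hz₂, h₂⟩, hne⟩ := h
  rw [Set.one_lt_ncard_iff hfin]
  exact ⟨s(z₁, w₁), s(z₂, w₂), mk_mem_edgeBoundary h₁.symm hz₁ hw₁,
    mk_mem_edgeBoundary h₂.symm hz₂ hw₂,
    fun h => hne ((mk_eq_mk_iff_of_mem_of_notMem hz₁ hw₂).1 h).2⟩

lemma edgeDiff_indicator_one (A : Set V) {e : Sym2 V} (he : e ∈ G.edgeSet) :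
    edgeDiff (A.indicator 1) e = (edgeBoundary G A).indicator 1 e := by
  induction e using Sym2.ind with
  | h u w =>
    have hadj : G.Adj u w := he
    by_cases hu : u ∈ A <;> by_cases hw : w ∈ A <;>
      simp [mk_mem_edgeBoundary_iff, hadj, hu, hw]

lemma hasSum_edgeDiff_indicator_one {A : Set V} (hA : (edgeBoundary G A).Finite) :
    HasSum (fun e : G.edgeSet => edgeDiff (A.indicator 1) e) (edgeBoundary G A).ncard := by
  have hsub : edgeBoundary G A ⊆ G.edgeSet := fun _ he => he.1
  have : (fun e : G.edgeSet => edgeDiff (A.indicator 1) e) =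
      ((edgeBoundary G A).indicator 1) ∘ Subtype.val :=
    funext fun e => edgeDiff_indicator_one A e.2
  rw [this, hasSum_subtype_iff_indicator, Set.indicator_indicator, Set.inter_eq_right.2 hsub,
    Set.ncard_eq_toFinset_card _ hA]
  convert hasSum_sum_of_ne_finset_zero (f := (edgeBoundary G A).indicator (1 : Sym2 V → ℝ))
    (s := hA.toFinset) fun e he => Set.indicator_of_notMem (by simpa using he) _ using 1
  · rw [Finset.sum_congr rfl fun e he => Set.indicator_of_mem (hA.mem_toFinset.1 he) _]
    simp
  · infer_instance

lemma vertexBoundary_finite (hG : ∀ v, (G.neighborSet v).Finite) {A : Set V} (hA : A.Finite) :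
    (vertexBoundary G A).Finite :=
  (hA.biUnion fun v _ => hG v).subset fun _ ⟨_, _, hw, hadj⟩ =>
    Set.mem_biUnion hw hadj.symm

lemma edgeBoundary_finite (hG : ∀ v, (G.neighborSet v).Finite) {A : Set V} (hA : A.Finite) :
    (edgeBoundary G A).Finite := by
  refine ((hA.prod (vertexBoundary_finite hG hA)).image fun p => s(p.1, p.2)).subset ?_
  rintro _ ⟨h, u, w, rfl, hu, hw⟩
  exact ⟨(u, w), ⟨hu, hw, u, hu, h.symm⟩, rfl⟩

lemma eq_sum_layers {a : ℕ → ℝ} {K : ℕ} (haK : ∀ k, K ≤ k → a k = 0) (i : ℕ) :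
    a i = ∑ k ∈ Finset.range K, (a k - a (k + 1)) * if i ≤ k then 1 else 0 := by
  simp only [mul_ite, mul_one, mul_zero]
  rw [← Finset.sum_filter]
  rcases le_or_gt i K with hi | hi
  · have : (Finset.range K).filter (i ≤ ·) = Finset.Ico i K := by
      ext k
      simp only [Finset.mem_filter, Finset.mem_range, Finset.mem_Ico]
      omega
    rw [this, Finset.sum_Ico_eq_sub _ hi, Finset.sum_range_sub', Finset.sum_range_sub',
      haK K le_rfl]
    ring
  · have : (Finset.range K).filter (i ≤ ·) = ∅ := by
      ext k
      simp only [Finset.mem_filter, Finset.mem_range, Finset.notMem_empty, iff_false]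
      omega
    rw [this, Finset.sum_empty, haK i hi.le]

lemma abs_sub_eq_sum_layers {a : ℕ → ℝ} {K : ℕ} (ha : Antitone a)
    (haK : ∀ k, K ≤ k → a k = 0) (i j : ℕ) :
    |a i - a j| = ∑ k ∈ Finset.range K, (a k - a (k + 1)) *
      |(if i ≤ k then 1 else 0) - (if j ≤ k then 1 else 0)| := by
  wlog hij : i ≤ j generalizing i j
  · simp_rw [abs_sub_comm (a i), this j i (le_of_not_ge hij), abs_sub_comm]
  rw [abs_of_nonneg (sub_nonneg.2 (ha hij)), eq_sum_layers haK i, eq_sum_layers haK j,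
    ← Finset.sum_sub_distrib]
  refine Finset.sum_congr rfl fun k _ => ?_
  rw [← mul_sub, abs_of_nonneg]
  split_ifs <;> norm_num
  omega

theorem gradL1_comp_eq_sum {a : ℕ → ℝ} {K : ℕ} (ha : Antitone a) (haK : ∀ k, K ≤ k → a k = 0)
    (r : V → ℕ) (hfin : ∀ k, (edgeBoundary G {v | r v ≤ k}).Finite) :
    gradL1 G (a ∘ r) =
      ∑ k ∈ Finset.range K, (a k - a (k + 1)) * (edgeBoundary G {v | r v ≤ k}).ncard := by
  have hlayers : (fun e : G.edgeSet => edgeDiff (a ∘ r) e) = fun e : G.edgeSet =>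
      ∑ k ∈ Finset.range K, (a k - a (k + 1)) * edgeDiff ({v | r v ≤ k}.indicator 1) e := by
    funext ⟨e, _⟩
    induction e using Sym2.ind with
    | h u w => simp [abs_sub_eq_sum_layers ha haK, Set.indicator_apply]
  rw [gradL1_eq_tsum, hlayers]
  exact (hasSum_sum fun k _ =>
    (hasSum_edgeDiff_indicator_one (hfin k)).mul_left (a k - a (k + 1))).tsum_eq

lemma abs_sub_le_apply_zero {a : ℕ → ℝ} (ha : Antitone a) (ha0 : ∀ k, 0 ≤ a k) (i j : ℕ) :
    |a i - a j| ≤ a 0 :=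
  abs_sub_le_iff.2 ⟨by linarith [ha (Nat.zero_le i), ha0 j], by linarith [ha (Nat.zero_le j), ha0 i]⟩

theorem gradLinf_comp_le {a : ℕ → ℝ} (ha : Antitone a) {r : V → ℕ}
    (hr : ∀ u w, G.Adj u w → r w ≤ r u + 2) {c : ℝ} (hc : ∀ k, a k - a (k + 2) ≤ c) :
    gradLinf G (a ∘ r) ≤ c := by
  have hdiff : ∀ u w, G.Adj u w → r u ≤ r w → |a (r u) - a (r w)| ≤ c := fun u w h hle => by
    rw [abs_of_nonneg (sub_nonneg.2 (ha hle))]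
    linarith [ha (hr u w h), hc (r u)]
  refine Real.iSup_le (fun ⟨e, he⟩ => ?_) ((sub_nonneg.2 (ha (Nat.zero_le 2))).trans (hc 0))
  induction e using Sym2.ind with
  | h u w =>
    rcases le_total (r u) (r w) with hle | hle
    · exact hdiff u w he hle
    · show |a (r u) - a (r w)| ≤ c
      rw [abs_sub_comm]
      exact hdiff w u he.symm hle

theorem sub_le_gradLinf_comp {a : ℕ → ℝ} (ha : Antitone a) (ha0 : ∀ k, 0 ≤ a k) {r : V → ℕ}
    (hr : r.Injective) {k : ℕ} (h : (vertexBoundary G {v | r v ≤ k}).Nontrivial) :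
    a k - a (k + 2) ≤ gradLinf G (a ∘ r) := by
  obtain ⟨w₁, ⟨hw₁, z₁, hz₁, hadj₁⟩, w₂, ⟨hw₂, z₂, hz₂, hadj₂⟩, hne⟩ := h
  simp only [Set.mem_ofPred_eq, not_le] at hw₁ hw₂ hz₁ hz₂
  -- two distinct ranks above `k`, so one of them is at least `k + 2`
  obtain ⟨w, z, hz, hw, hadj⟩ : ∃ w z, r z ≤ k ∧ k + 2 ≤ r w ∧ G.Adj w z := by
    have := hr.ne hne
    by_cases h₁ : k + 2 ≤ r w₁
    · exact ⟨w₁, z₁, hz₁, h₁, hadj₁⟩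
    · exact ⟨w₂, z₂, hz₂, by omega, hadj₂⟩
  have hbdd : BddAbove (Set.range fun e : G.edgeSet => edgeDiff (a ∘ r) e) := by
    refine ⟨a 0, ?_⟩
    rintro _ ⟨⟨e, _⟩, rfl⟩
    induction e using Sym2.ind with
    | h u w => exact abs_sub_le_apply_zero ha ha0 _ _
  calc a k - a (k + 2) ≤ a (r z) - a (r w) := sub_le_sub (ha hz) (ha hw)
    _ ≤ edgeDiff (a ∘ r) s(z, w) := le_abs_self _
    _ ≤ gradLinf G (a ∘ r) := le_ciSup hbdd ⟨s(z, w), hadj.symm⟩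

lemma setOf_symm_le_eq_image (ρ : ℕ ≃ V) (k : ℕ) :
    {v | ρ.symm v ≤ k} = ρ '' Set.Iic k := by
  rw [ρ.image_eq_preimage_symm]
  rfl

lemma finite_setOf_symm_le (ρ : ℕ ≃ V) (k : ℕ) : {v | ρ.symm v ≤ k}.Finite := by
  rw [setOf_symm_le_eq_image]
  exact (Set.finite_Iic k).image ρ

lemma ncard_setOf_symm_le (ρ : ℕ ≃ V) (k : ℕ) : {v | ρ.symm v ≤ k}.ncard = k + 1 := by
  rw [setOf_symm_le_eq_image, Set.ncard_image_of_injective _ ρ.injective, ← Finset.coe_Iic,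
    Set.ncard_coe_finset, Nat.card_Iic]

end Gradient

section Ladder

lemma ladderGraph_adj_iff {m n : ℕ} {i j : Fin 2} :
    ladderGraph.Adj (m, i) (n, j) ↔ (i = j ∧ (m = n + 1 ∨ n = m + 1)) ∨ (m = n ∧ i ≠ j) := by
  show |(m : ℤ) - n| + |(i.1 : ℤ) - j.1| = 1 ↔ _
  rw [Int.abs_eq_natAbs, Int.abs_eq_natAbs, Fin.ext_iff.ne, Fin.ext_iff]
  have := i.2
  have := j.2
  omega

lemma ladderGraph_adj_succ (n : ℕ) (i : Fin 2) : ladderGraph.Adj (n, i) (n + 1, i) :=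
  ladderGraph_adj_iff.2 (.inl ⟨rfl, .inr rfl⟩)

lemma ladderGraph_adj_of_ne (n : ℕ) {i j : Fin 2} (h : i ≠ j) : ladderGraph.Adj (n, i) (n, j) :=
  ladderGraph_adj_iff.2 (.inr ⟨rfl, h⟩)

lemma ladderGraph_neighborSet_finite (v : ℕ × Fin 2) : (ladderGraph.neighborSet v).Finite := by
  refine ((Set.finite_Iic (v.1 + 1)).prod Set.finite_univ).subset ?_
  rintro ⟨n, j⟩ h
  obtain ⟨m, i⟩ := v
  have := ladderGraph_adj_iff.1 h
  simp only [Set.mem_prod, Set.mem_Iic, Set.mem_univ, and_true]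
  omega

def lexEquiv : ℕ ≃ ℕ × Fin 2 where
  toFun := lexEnum
  invFun v := 2 * v.1 + v.2
  left_inv n := by simp [lexEnum]; omega
  right_inv := by
    rintro ⟨m, i⟩
    have := i.2
    simp only [lexEnum, Prod.mk.injEq, Fin.ext_iff]
    omega

@[simp]
lemma lexEquiv_symm_apply (v : ℕ × Fin 2) : lexEquiv.symm v = 2 * v.1 + v.2 := rfl

lemma lexEquiv_symm_le_add_two {u w : ℕ × Fin 2} (h : ladderGraph.Adj u w) :
    lexEquiv.symm w ≤ lexEquiv.symm u + 2 := by
  obtain ⟨m, i⟩ := u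
  obtain ⟨n, j⟩ := w
  have := ladderGraph_adj_iff.1 h
  rw [Fin.ext_iff.ne, Fin.ext_iff] at this
  simp only [lexEquiv_symm_apply]
  omega

def ladderStep (v : ℕ × Fin 2) : Sym2 (ℕ × Fin 2) := s(v, (v.1 + 1, v.2))

lemma edgeBoundary_lexSeg_subset (k : ℕ) :
    edgeBoundary ladderGraph {v | lexEquiv.symm v ≤ k} ⊆
      {ladderStep (lexEquiv k), ladderStep (lexEquiv (k - 1))} ∪
        {e | Even k ∧ e = s((k / 2, 0), (k / 2, 1))} := by
  rintro _ ⟨hadj, ⟨m, i⟩, ⟨n, j⟩, rfl, hu, hw⟩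
  simp only [Set.mem_ofPred_eq, lexEquiv_symm_apply] at hu hw
  have := i.2
  have := j.2
  rcases ladderGraph_adj_iff.1 hadj with ⟨rfl, rfl | rfl⟩ | ⟨rfl, hij⟩
  · omega
  · left
    have hstep : s((m, i), (m + 1, i)) = ladderStep (lexEquiv (2 * m + i)) :=
      congrArg ladderStep (lexEquiv.apply_symm_apply (m, i)).symm
    obtain hk | hk : 2 * m + i = k ∨ 2 * m + i = k - 1 := by omega
    all_goals simp [hstep, hk]
  · right
    rw [Fin.ext_iff.ne] at hij
    obtain ⟨rfl, rfl⟩ : i = 0 ∧ j = 1 := by simp only [Fin.ext_iff]; omega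
    simp only [Fin.val_zero, Fin.val_one] at hu hw
    obtain rfl : k = 2 * m := by omega
    exact ⟨even_two_mul m, by simp⟩

lemma ncard_edgeBoundary_lexSeg_le_three (k : ℕ) :
    (edgeBoundary ladderGraph {v | lexEquiv.symm v ≤ k}).ncard ≤ 3 := by
  have hsub := edgeBoundary_lexSeg_subset k
  refine (Set.ncard_le_ncard (t := {ladderStep (lexEquiv k), ladderStep (lexEquiv (k - 1)),
    s((k / 2, 0), (k / 2, 1))}) ?_ (Set.toFinite _)).trans ?_
  · intro e he
    rcases hsub he with (rfl | rfl) | ⟨-, rfl⟩ <;> simp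
  · exact (Set.ncard_insert_le _ _).trans (by grw [Set.ncard_insert_le, Set.ncard_singleton])

lemma ncard_edgeBoundary_lexSeg_le_two {k : ℕ} (hk : k = 0 ∨ Odd k) :
    (edgeBoundary ladderGraph {v | lexEquiv.symm v ≤ k}).ncard ≤ 2 := by
  have hsub := edgeBoundary_lexSeg_subset k
  rcases hk with rfl | hk
  · refine (Set.ncard_le_ncard (t := {ladderStep (lexEquiv 0), s((0, 0), (0, 1))}) ?_
      (Set.toFinite _)).trans ?_
    · intro e he
      rcases hsub he with (rfl | rfl) | ⟨-, rfl⟩ <;> simp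
    · exact (Set.ncard_insert_le _ _).trans (by rw [Set.ncard_singleton])
  · refine (Set.ncard_le_ncard (t := {ladderStep (lexEquiv k), ladderStep (lexEquiv (k - 1))})
      ?_ (Set.toFinite _)).trans ?_
    · intro e he
      rcases hsub he with h | ⟨hk', -⟩
      · exact h
      · exact absurd hk (Nat.not_odd_iff_even.2 hk')
    · exact (Set.ncard_insert_le _ _).trans (by rw [Set.ncard_singleton])

lemma exists_mem_succ_notMem {A : Set (ℕ × Fin 2)} (hA : A.Finite) {n : ℕ} {i : Fin 2}
    (h : (n, i) ∈ A) : ∃ t, (t, i) ∈ A ∧ (t + 1, i) ∉ A := by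
  obtain ⟨t, ht, hmax⟩ := Set.exists_max_image {m | (m, i) ∈ A} id
    (hA.preimage (Prod.mk_left_injective i).injOn) ⟨n, h⟩
  exact ⟨t, ht, fun h' => by simpa using hmax _ h'⟩

lemma vertexBoundary_ladderGraph_nontrivial {A : Set (ℕ × Fin 2)} (hA : A.Finite)
    (hne : A.Nonempty) : (vertexBoundary ladderGraph A).Nontrivial := by
  obtain ⟨⟨n, i⟩, hn⟩ := hne
  obtain ⟨t, ht, ht'⟩ := exists_mem_succ_notMem hA hn
  obtain ⟨j, hji⟩ := exists_ne i
  have hw : (t + 1, i) ∈ vertexBoundary ladderGraph A :=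
    ⟨ht', (t, i), ht, (ladderGraph_adj_succ t i).symm⟩
  by_cases hj : (t, j) ∈ A
  · obtain ⟨s, hs, hs'⟩ := exists_mem_succ_notMem hA hj
    exact ⟨_, hw, (s + 1, j), ⟨hs', (s, j), hs, (ladderGraph_adj_succ s j).symm⟩,
      by simp [hji.symm]⟩
  · exact ⟨_, hw, (t, j), ⟨hj, (t, i), ht, ladderGraph_adj_of_ne t hji⟩, by simp⟩

lemma exists_rung_of_odd {A : Set (ℕ × Fin 2)} (hodd : Odd A.ncard) :
    ∃ c i j, i ≠ j ∧ (c, i) ∈ A ∧ (c, j) ∉ A := by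
  by_contra! h
  have hA : A = (Prod.fst '' A) ×ˢ Set.univ := by
    ext ⟨c, i⟩
    simp only [Set.mem_prod, Set.mem_image, Set.mem_univ, and_true]
    refine ⟨fun hv => ⟨_, hv, rfl⟩, ?_⟩
    rintro ⟨⟨c', j⟩, hj, rfl⟩
    by_cases hji : j = i
    · exact hji ▸ hj
    · exact h c' j i hji hj
  rw [hA, Set.ncard_prod, Set.ncard_univ, Nat.card_eq_fintype_card, Fintype.card_fin] at hodd
  exact Nat.not_even_iff_odd.2 hodd (even_two.mul_left _)

lemma two_lt_ncard_edgeBoundary_ladderGraph {A : Set (ℕ × Fin 2)} (hA : A.Finite)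
    (hodd : Odd A.ncard) (h3 : 3 ≤ A.ncard) : 2 < (edgeBoundary ladderGraph A).ncard := by
  rw [Set.two_lt_ncard_iff (edgeBoundary_finite ladderGraph_neighborSet_finite hA)]
  by_cases hrows : ∀ j : Fin 2, ∃ n, (n, j) ∈ A
  · obtain ⟨c, i, j, hij, hi, hj⟩ := exists_rung_of_odd hodd
    obtain ⟨n₀, h₀⟩ := hrows 0
    obtain ⟨n₁, h₁⟩ := hrows 1
    obtain ⟨t₀, ht₀, ht₀'⟩ := exists_mem_succ_notMem hA h₀
    obtain ⟨t₁, ht₁, ht₁'⟩ := exists_mem_succ_notMem hA h₁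
    refine ⟨_, _, _, mk_mem_edgeBoundary (ladderGraph_adj_succ t₀ 0) ht₀ ht₀',
      mk_mem_edgeBoundary (ladderGraph_adj_succ t₁ 1) ht₁ ht₁',
      mk_mem_edgeBoundary (ladderGraph_adj_of_ne c hij) hi hj, ?_, ?_, ?_⟩ <;>
    rw [Ne, mk_eq_mk_iff_of_mem_of_notMem (by assumption) (by assumption)] <;> simp <;> omega
  · push Not at hrows
    obtain ⟨j, hj⟩ := hrows
    have hrung : ∀ v ∈ A, s(v, (v.1, j)) ∈ edgeBoundary ladderGraph A := fun v hv =>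
      mk_mem_edgeBoundary (ladderGraph_adj_of_ne v.1 fun h => hj v.1 (by rw [← h]; exact hv))
        hv (hj _)
    obtain ⟨x, y, z, hx, hy, hz, hxy, hxz, hyz⟩ := (Set.two_lt_ncard_iff hA).1 h3
    exact ⟨_, _, _, hrung x hx, hrung y hy, hrung z hz,
      fun h => hxy ((mk_eq_mk_iff_of_mem_of_notMem hx (hj _)).1 h).1,
      fun h => hxz ((mk_eq_mk_iff_of_mem_of_notMem hx (hj _)).1 h).1,
      fun h => hyz ((mk_eq_mk_iff_of_mem_of_notMem hy (hj _)).1 h).1⟩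

theorem ncard_edgeBoundary_lexSeg_le {A : Set (ℕ × Fin 2)} (hA : A.Finite) {k : ℕ}
    (hcard : A.ncard = k + 1) :
    (edgeBoundary ladderGraph {v | lexEquiv.symm v ≤ k}).ncard ≤
      (edgeBoundary ladderGraph A).ncard := by
  have hfin := edgeBoundary_finite ladderGraph_neighborSet_finite hA
  by_cases hk : k = 0 ∨ Odd k
  · have hne : A.Nonempty := Set.nonempty_of_ncard_ne_zero (by omega)
    exact (ncard_edgeBoundary_lexSeg_le_two hk).trans
      (one_lt_ncard_edgeBoundary hfin (vertexBoundary_ladderGraph_nontrivial hA hne))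
  · push Not at hk
    obtain ⟨hk0, hk⟩ := hk
    obtain ⟨m, rfl⟩ := Nat.not_odd_iff_even.1 hk
    exact (ncard_edgeBoundary_lexSeg_le_three _).trans
      (two_lt_ncard_edgeBoundary_ladderGraph hA ⟨m, by omega⟩ (by omega))

end Ladder

section PolyaSzego

variable {a : ℕ → ℝ} {K : ℕ}

lemma nonneg_of_antitone_of_eq_zero (ha : Antitone a) (haK : ∀ k, K ≤ k → a k = 0) (k : ℕ) :
    0 ≤ a k :=
  (haK _ (le_max_right k K)).symm.le.trans (ha (le_max_left k K))

lemma edgeBoundary_setOf_symm_le_finite (ρ : ℕ ≃ ℕ × Fin 2) (k : ℕ) :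
    (edgeBoundary ladderGraph {v | ρ.symm v ≤ k}).Finite :=
  edgeBoundary_finite ladderGraph_neighborSet_finite (finite_setOf_symm_le ρ k)

theorem gradL1_lex_le (ha : Antitone a) (haK : ∀ k, K ≤ k → a k = 0) (ρ : ℕ ≃ ℕ × Fin 2) :
    gradL1 ladderGraph (a ∘ lexEquiv.symm) ≤ gradL1 ladderGraph (a ∘ ρ.symm) := by
  rw [gradL1_comp_eq_sum ha haK _ (edgeBoundary_setOf_symm_le_finite lexEquiv),
    gradL1_comp_eq_sum ha haK _ (edgeBoundary_setOf_symm_le_finite ρ)]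
  refine Finset.sum_le_sum fun k _ => mul_le_mul_of_nonneg_left ?_ (sub_nonneg.2 (ha k.le_succ))
  exact_mod_cast ncard_edgeBoundary_lexSeg_le (finite_setOf_symm_le ρ k) (ncard_setOf_symm_le ρ k)

theorem gradLinf_lex_le (ha : Antitone a) (haK : ∀ k, K ≤ k → a k = 0) (ρ : ℕ ≃ ℕ × Fin 2) :
    gradLinf ladderGraph (a ∘ lexEquiv.symm) ≤ gradLinf ladderGraph (a ∘ ρ.symm) :=
  gradLinf_comp_le ha (fun _ _ => lexEquiv_symm_le_add_two) fun k =>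
    sub_le_gradLinf_comp ha (nonneg_of_antitone_of_eq_zero ha haK) ρ.symm.injective
      (vertexBoundary_ladderGraph_nontrivial (finite_setOf_symm_le ρ k) ⟨ρ 0, by simp⟩)

end PolyaSzego

theorem lex_polya_szego_general (f fstar : ℕ × Fin 2 → ℝ)
    (hsupp : (Function.support f).Finite)
    (hre : IsRearrangement lexEnum f fstar) :
    gradL1 ladderGraph fstar ≤ gradL1 ladderGraph f ∧
      gradLinf ladderGraph fstar ≤ gradLinf ladderGraph f := by
  obtain ⟨⟨σ, rfl⟩, hanti⟩ := hre
  set ρ := lexEquiv.trans σ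
  have ha : Antitone (f ∘ ρ) := fun m n h => hanti m n h
  obtain ⟨K, hK⟩ := (hsupp.preimage ρ.injective.injOn).bddAbove
  have haK : ∀ k, K + 1 ≤ k → (f ∘ ρ) k = 0 := fun k hk => by
    by_contra h
    exact absurd (hK h) (by omega)
  have hf : (f ∘ ρ) ∘ ρ.symm = f := by
    funext v
    simp
  have hfstar : (f ∘ ρ) ∘ lexEquiv.symm = f ∘ σ := by
    funext v
    simp only [ρ, Function.comp_apply, Equiv.trans_apply, Equiv.apply_symm_apply]
  have hL1 := gradL1_lex_le ha haK ρ
  have hLinf := gradLinf_lex_le ha haK ρ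
  rw [hf, hfstar] at hL1 hLinf
  exact ⟨hL1, hLinf⟩

/-- On the ladder graph, the lexicographic rearrangement of a finitely
supported `f : ℕ×{0,1} → ℝ_{≥0}` satisfies `‖∇f*‖_{L¹} ≤ ‖∇f‖_{L¹}` and
`‖∇f*‖_{L^∞} ≤ ‖∇f‖_{L^∞}`. -/
theorem lex_polya_szego (f fstar : ℕ × Fin 2 → ℝ)
    (hsupp : (Function.support f).Finite) (hpos : ∀ x, 0 ≤ f x)
    (hre : IsRearrangement lexEnum f fstar) :
    gradL1 ladderGraph fstar ≤ gradL1 ladderGraph f ∧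
      gradLinf ladderGraph fstar ≤ gradLinf ladderGraph f :=
  lex_polya_szego_general f fstar hsupp hre
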